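/- arXiv:1603.01059 — 4 statements merged into one kernel-verified Lean document; each statement's English description precedes it below -/
import Mathlib

section
/- For real s > 0 define G(s) = ∫₀^∞ (t+1)^{−3/2} e^{−s t} dt. Then (G(s) − 2)/√s tends to −2√π as s tends to 0 from the right; that is, G(s) has the asymptotic expansion G(s) ∼ 2 − 2√(π s) as s → 0⁺. -/
open MeasureTheory Real Set Filter Topology

/-!
Integrating by parts, `G(s) = 2 - 2 s H(s)` with `H(s) = ∫₀^∞ (t+1)^{-1/2} e^{-st} dt`, and
the substitution `u = s t` turns `√s · H(s)` into `∫₀^∞ (u+s)^{-1/2} e^{-u} du`, which tends to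
`Γ(1/2) = √π` as `s → 0⁺` by dominated convergence (dominated by `u^{-1/2} e^{-u}`).
-/

noncomputable def laplaceRpowAddOne (p s : ℝ) : ℝ :=
  ∫ t in Ioi (0 : ℝ), (t + 1) ^ p * exp (-s * t)

lemma integrableOn_rpow_add_one_mul_exp_neg_mul {p s : ℝ} (hp : p ≤ 0) (hs : 0 < s) :
    IntegrableOn (fun t : ℝ => (t + 1) ^ p * exp (-s * t)) (Ioi 0) := by
  refine (exp_neg_integrableOn_Ioi 0 hs).mono' (by fun_prop) ?_
  filter_upwards [ae_restrict_mem measurableSet_Ioi] with t (ht : 0 < t)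
  rw [norm_mul, norm_of_nonneg (by positivity), norm_of_nonneg (exp_pos _).le]
  exact mul_le_of_le_one_left (exp_pos _).le (rpow_le_one_of_one_le_of_nonpos (by linarith) hp)

theorem laplaceRpowAddOne_recurrence {a s : ℝ} (ha : 0 ≤ a) (hs : 0 < s) :
    a * laplaceRpowAddOne (-a - 1) s + s * laplaceRpowAddOne (-a) s = 1 := by
  set f : ℝ → ℝ := fun t => -((t + 1) ^ (-a) * exp (-s * t))
  have hderiv : ∀ t ∈ Ioi (0 : ℝ), HasDerivAt f
      (a * ((t + 1) ^ (-a - 1) * exp (-s * t)) + s * ((t + 1) ^ (-a) * exp (-s * t))) t := by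
    intro t (ht : 0 < t)
    have hpow := ((hasDerivAt_id' t).add_const 1).rpow_const (p := -a) (Or.inl (by linarith))
    have hexp := ((hasDerivAt_id' t).const_mul (-s)).exp
    exact (hpow.mul hexp).neg.congr_deriv (by ring)
  have hcont : ContinuousWithinAt f (Ici 0) 0 :=
    ContinuousAt.continuousWithinAt (by fun_prop (disch := norm_num))
  have hint₁ :=
    (integrableOn_rpow_add_one_mul_exp_neg_mul (p := -a - 1) (by linarith) hs).const_mul a
  have hint₂ :=
    (integrableOn_rpow_add_one_mul_exp_neg_mul (p := -a) (by linarith) hs).const_mul s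
  have hlim : Tendsto f atTop (𝓝 0) := by
    refine squeeze_zero_norm' (a := fun t => exp (-s * t)) ?_ ?_
    · filter_upwards [eventually_ge_atTop (0 : ℝ)] with t ht
      rw [norm_neg, norm_mul, norm_of_nonneg (by positivity), norm_of_nonneg (exp_pos _).le]
      exact mul_le_of_le_one_left (exp_pos _).le
        (rpow_le_one_of_one_le_of_nonpos (by linarith) (by linarith))
    · exact tendsto_exp_atBot.comp
        ((tendsto_const_mul_atBot_of_neg (by linarith)).mpr tendsto_id)
  have hibp := integral_Ioi_of_hasDerivAt_of_tendsto hcont hderiv (hint₁.add hint₂) hlim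
  rw [integral_add hint₁ hint₂, integral_const_mul, integral_const_mul,
    show f 0 = -1 by simp [f]] at hibp
  unfold laplaceRpowAddOne
  linarith

theorem rpow_mul_laplaceRpowAddOne (p : ℝ) {s : ℝ} (hs : 0 < s) :
    s ^ (p + 1) * laplaceRpowAddOne p s = ∫ u in Ioi (0 : ℝ), (u + s) ^ p * exp (-u) := by
  have hsub := integral_comp_mul_left_Ioi' (E := ℝ) (fun u : ℝ => (u + s) ^ p * exp (-u)) 0 hs
  rw [mul_zero] at hsub
  rw [← hsub, smul_eq_mul, rpow_add_one hs.ne', laplaceRpowAddOne, mul_comm (s ^ p) s, mul_assoc,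
    ← integral_const_mul]
  congr 1
  refine setIntegral_congr_fun measurableSet_Ioi fun t (ht : 0 < t) => ?_
  rw [show s * t + s = s * (t + 1) by ring, mul_rpow hs.le (by linarith), neg_mul]
  ring

theorem tendsto_integral_rpow_add_mul_exp_neg_Gamma {p : ℝ} (hp₁ : -1 < p) (hp₀ : p ≤ 0) :
    Tendsto (fun s => ∫ u in Ioi (0 : ℝ), (u + s) ^ p * exp (-u)) (𝓝[>] 0)
      (𝓝 (Gamma (p + 1))) := by
  have hGamma : Gamma (p + 1) = ∫ u in Ioi (0 : ℝ), (u + 0) ^ p * exp (-u) := by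
    rw [Gamma_eq_integral (by linarith)]
    simp only [add_sub_cancel_right, add_zero, mul_comm]
  rw [hGamma]
  refine tendsto_integral_filter_of_dominated_convergence (fun u => u ^ p * exp (-u))
    (Eventually.of_forall fun s => by fun_prop) ?_ ?_ ?_
  · filter_upwards [self_mem_nhdsWithin] with s (hs : 0 < s)
    filter_upwards [ae_restrict_mem measurableSet_Ioi] with u (hu : 0 < u)
    rw [norm_of_nonneg (by positivity)]
    exact mul_le_mul_of_nonneg_right (rpow_le_rpow_of_nonpos hu (by linarith) hp₀)
      (exp_pos _).le
  · have := GammaIntegral_convergent (s := p + 1) (by linarith)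
    refine this.congr_fun (fun u _ => ?_) measurableSet_Ioi
    rw [add_sub_cancel_right, mul_comm]
  · filter_upwards [ae_restrict_mem measurableSet_Ioi] with u (hu : 0 < u)
    refine (ContinuousAt.tendsto ?_).mono_left nhdsWithin_le_nhds
    exact ((continuousAt_const.add continuousAt_id).rpow_const
      (Or.inl (by simpa using hu.ne'))).mul continuousAt_const

/-- For real `s > 0` let `G(s) = ∫₀^∞ (t+1)^{-3/2} e^{-s t} dt`. Then
`(G(s) - 2)/√s → -2√π` as `s → 0⁺`, i.e. `G(s) ∼ 2 - 2√(π s)` as `s → 0⁺`. -/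
theorem laplace_asymptotics_at_zero :
    Filter.Tendsto
      (fun s : ℝ =>
        ((∫ t in Set.Ioi (0:ℝ), (t + 1) ^ (-(3/2 : ℝ)) * Real.exp (-s * t)) - 2)
          / Real.sqrt s)
      (nhdsWithin 0 (Set.Ioi 0)) (nhds (-2 * Real.sqrt π)) := by
  have hlim := (tendsto_integral_rpow_add_mul_exp_neg_Gamma (p := -(1 / 2)) (by norm_num)
    (by norm_num)).const_mul (-2)
  rw [show -(1 / 2) + 1 = (1 / 2 : ℝ) by norm_num, Gamma_one_half_eq] at hlim
  refine hlim.congr' ?_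
  filter_upwards [self_mem_nhdsWithin] with s (hs : 0 < s)
  have hrec := laplaceRpowAddOne_recurrence (a := 1 / 2) (by norm_num) hs
  rw [show -(1 / 2) - 1 = -(3 / 2 : ℝ) by norm_num] at hrec
  rw [← rpow_mul_laplaceRpowAddOne _ hs, show -(1 / 2) + 1 = (1 / 2 : ℝ) by norm_num,
    ← sqrt_eq_rpow, eq_div_iff (sqrt_pos.mpr hs).ne']
  change _ = laplaceRpowAddOne (-(3 / 2)) s - 2
  have hsqrt := mul_self_sqrt hs.le
  linear_combination (-2 * laplaceRpowAddOne (-(1 / 2)) s) * hsqrt - 2 * hrec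
end

section
/- Let α ≥ 0 and let f_o : [0,∞) → ℂ be measurable with ‖f_o‖_{1,α} = ∫₀^∞ |f_o(t)| e^{−α t} dt < 1. Then there exists a measurable function f_cl ∈ L_{1,α} (the closed-loop impulse response) satisfying f_cl(t) + (f_o ∗ f_cl)(t) = f_o(t) for almost every t ≥ 0, and ‖f_cl‖_{1,α} ≤ ‖f_o‖_{1,α} / (1 − ‖f_o‖_{1,α}). -/
/-!
Weighting both factors of a causal convolution by `e^{-αs}` weights the convolution by `e^{-αt}`,
so it suffices to treat `α = 0`. On `L¹(0,∞)` convolution with `f` has norm at most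
`r = ∫ ‖f‖ < 1`, so `g ↦ f - f ∗ g` is a contraction; its fixed point `v` solves `v + f ∗ v = f`,
and `‖v‖ ≤ r + r ‖v‖` gives `‖v‖ ≤ r / (1 - r)`.
-/

open MeasureTheory Real Set

/-- The causal convolution `(f ∗ g)(t) = ∫₀^t f(t-τ) g(τ) dτ`. -/
noncomputable def causalConv (f g : ℝ → ℂ) (t : ℝ) : ℂ :=
  ∫ τ in (0:ℝ)..t, f (t - τ) * g τ

section CausalConv

variable {f g h : ℝ → ℂ}

lemma indicator_causalConv (f g : ℝ → ℂ) :
    (Ioi 0).indicator (causalConv f g) = posConvolution g f (ContinuousLinearMap.mul ℝ ℂ).flip :=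
  rfl

lemma integrableOn_causalConv (hf : IntegrableOn f (Ioi 0)) (hg : IntegrableOn g (Ioi 0)) :
    IntegrableOn (causalConv f g) (Ioi 0) := by
  rw [← integrable_indicator_iff measurableSet_Ioi, indicator_causalConv]
  exact integrable_posConvolution hg hf _

lemma integral_norm_causalConv_le (hf : IntegrableOn f (Ioi 0)) (hg : IntegrableOn g (Ioi 0)) :
    ∫ t in Ioi 0, ‖causalConv f g t‖ ≤ (∫ t in Ioi 0, ‖f t‖) * ∫ t in Ioi 0, ‖g t‖ := by
  have hpos := integrable_posConvolution hg.norm hf.norm (ContinuousLinearMap.mul ℝ ℝ)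
  rw [posConvolution, integrable_indicator_iff measurableSet_Ioi] at hpos
  calc ∫ t in Ioi 0, ‖causalConv f g t‖
      ≤ ∫ t in Ioi 0, ∫ τ in 0..t, ‖g τ‖ * ‖f (t - τ)‖ := by
        refine setIntegral_mono_on (integrableOn_causalConv hf hg).norm hpos measurableSet_Ioi
          fun t ht => ?_
        refine (intervalIntegral.norm_integral_le_integral_norm (le_of_lt ht)).trans_eq ?_
        simp only [norm_mul, mul_comm]
    _ = (∫ t in Ioi 0, ‖f t‖) * ∫ t in Ioi 0, ‖g t‖ := by
        rw [mul_comm]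
        exact integral_posConvolution hg.norm hf.norm (ContinuousLinearMap.mul ℝ ℝ)

lemma causalConv_congr_ae (hgh : g =ᵐ[volume.restrict (Ioi 0)] h) {t : ℝ} (ht : 0 ≤ t) :
    causalConv f g t = causalConv f h t := by
  refine intervalIntegral.integral_congr_ae ?_
  filter_upwards [ae_restrict_iff' measurableSet_Ioi |>.mp hgh] with τ hτ hτt
  rw [uIoc_of_le ht] at hτt
  rw [hτ hτt.1]

lemma ae_intervalIntegrable_causalConv_integrand (hf : IntegrableOn f (Ioi 0))
    (hg : IntegrableOn g (Ioi 0)) :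
    ∀ᵐ t ∂volume.restrict (Ioi 0), IntervalIntegrable (fun τ => f (t - τ) * g τ) volume 0 t := by
  -- Extending `f` by zero off `Ici 0` (not `Ioi 0`) keeps the integrand exact at `τ = t`.
  rw [← integrableOn_Ici_iff_integrableOn_Ioi, ← integrable_indicator_iff measurableSet_Ici] at hf
  rw [← integrable_indicator_iff measurableSet_Ioi] at hg
  filter_upwards
    [ae_restrict_of_ae (hg.ae_convolution_exists (ContinuousLinearMap.mul ℝ ℂ).flip hf),
    ae_restrict_mem measurableSet_Ioi] with t ht ht0
  rw [intervalIntegrable_iff_integrableOn_Ioc_of_le (le_of_lt ht0)]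
  refine ht.integrable.integrableOn.congr_fun (fun τ hτ => ?_) measurableSet_Ioc
  simp [indicator_of_mem (show τ ∈ Ioi 0 from hτ.1),
    indicator_of_mem (show t - τ ∈ Ici 0 from sub_nonneg.2 hτ.2), mul_comm]

lemma ae_causalConv_sub (hf : IntegrableOn f (Ioi 0)) (hg : IntegrableOn g (Ioi 0))
    (hh : IntegrableOn h (Ioi 0)) :
    ∀ᵐ t ∂volume.restrict (Ioi 0),
      causalConv f (g - h) t = causalConv f g t - causalConv f h t := by
  filter_upwards [ae_intervalIntegrable_causalConv_integrand hf hg,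
    ae_intervalIntegrable_causalConv_integrand hf hh] with t hgt hht
  simp only [causalConv, Pi.sub_apply, mul_sub]
  exact intervalIntegral.integral_sub hgt hht

end CausalConv

section ResolventKernel

local notation "L¹₊" => Lp ℂ 1 (volume.restrict (Ioi (0 : ℝ)))

variable {f : ℝ → ℂ}

noncomputable def causalConvL1 (hf : IntegrableOn f (Ioi 0)) (g : L¹₊) : L¹₊ :=
  Integrable.toL1 _ (integrableOn_causalConv hf (L1.integrable_coeFn g))

lemma causalConvL1_sub (hf : IntegrableOn f (Ioi 0)) (g h : L¹₊) :
    causalConvL1 hf (g - h) = causalConvL1 hf g - causalConvL1 hf h := by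
  refine Lp.ext ?_
  filter_upwards [Integrable.coeFn_toL1 (integrableOn_causalConv hf (L1.integrable_coeFn (g - h))),
    Lp.coeFn_sub (causalConvL1 hf g) (causalConvL1 hf h),
    Integrable.coeFn_toL1 (integrableOn_causalConv hf (L1.integrable_coeFn g)),
    Integrable.coeFn_toL1 (integrableOn_causalConv hf (L1.integrable_coeFn h)),
    ae_causalConv_sub hf (L1.integrable_coeFn g) (L1.integrable_coeFn h),
    ae_restrict_mem measurableSet_Ioi] with t hgh hsub hg hh hconv ht
  rw [causalConvL1, hgh, hsub, Pi.sub_apply, causalConvL1, causalConvL1, hg, hh, ← hconv]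
  exact causalConv_congr_ae (Lp.coeFn_sub g h) (le_of_lt ht)

lemma norm_causalConvL1_le (hf : IntegrableOn f (Ioi 0)) (g : L¹₊) :
    ‖causalConvL1 hf g‖ ≤ (∫ t in Ioi 0, ‖f t‖) * ‖g‖ := by
  rw [L1.norm_eq_integral_norm, L1.norm_eq_integral_norm]
  refine (integral_congr_ae ((Integrable.coeFn_toL1 _).fun_comp norm)).trans_le ?_
  exact integral_norm_causalConv_le hf (L1.integrable_coeFn g)

lemma lipschitzWith_causalConvL1 (hf : IntegrableOn f (Ioi 0)) :
    LipschitzWith (∫ t in Ioi 0, ‖f t‖).toNNReal (causalConvL1 hf) := by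
  refine LipschitzWith.of_dist_le_mul fun g h => ?_
  rw [dist_eq_norm, dist_eq_norm, ← causalConvL1_sub,
    Real.coe_toNNReal _ (integral_nonneg fun _ => norm_nonneg _)]
  exact norm_causalConvL1_le hf (g - h)

theorem exists_resolvent_of_integral_norm_lt_one (hf : IntegrableOn f (Ioi 0))
    (hr : ∫ t in Ioi 0, ‖f t‖ < 1) :
    ∃ v : ℝ → ℂ, Measurable v ∧ IntegrableOn v (Ioi 0) ∧
      (∀ᵐ t ∂volume.restrict (Ioi 0), v t + causalConv f v t = f t) ∧
      ∫ t in Ioi 0, ‖v t‖ ≤ (∫ t in Ioi 0, ‖f t‖) / (1 - ∫ t in Ioi 0, ‖f t‖) := by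
  set r := ∫ t in Ioi 0, ‖f t‖
  have hT : ContractingWith r.toNNReal fun g : L¹₊ => Integrable.toL1 f hf - causalConvL1 hf g :=
    ⟨Real.toNNReal_lt_one.2 hr, LipschitzWith.of_dist_le_mul fun g h => by
      rw [dist_sub_left]
      exact (lipschitzWith_causalConvL1 hf).dist_le_mul g h⟩
  set v := hT.fixedPoint
  have hv : Integrable.toL1 f hf - causalConvL1 hf v = v := hT.fixedPoint_isFixedPt
  have hv_norm : ‖v‖ ≤ r + r * ‖v‖ := calc
    ‖v‖ = ‖Integrable.toL1 f hf - causalConvL1 hf v‖ := by rw [hv]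
    _ ≤ ‖Integrable.toL1 f hf‖ + ‖causalConvL1 hf v‖ := norm_sub_le _ _
    _ ≤ r + r * ‖v‖ := by
      gcongr
      · rw [L1.norm_eq_integral_norm]
        exact (integral_congr_ae ((Integrable.coeFn_toL1 hf).fun_comp norm)).le
      · exact norm_causalConvL1_le hf v
  refine ⟨v, (Lp.stronglyMeasurable v).measurable, L1.integrable_coeFn v, ?_, ?_⟩
  · filter_upwards [Lp.coeFn_sub (Integrable.toL1 f hf) (causalConvL1 hf v),
      Integrable.coeFn_toL1 hf,
      Integrable.coeFn_toL1 (integrableOn_causalConv hf (L1.integrable_coeFn v))]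
      with t hsub hf' hconv
    rw [hv] at hsub
    rw [hsub, Pi.sub_apply, hf', causalConvL1, hconv, sub_add_cancel]
  · rw [← L1.norm_eq_integral_norm, le_div_iff₀ (by linarith)]
    linarith

end ResolventKernel

lemma causalConv_mul_exp (f g : ℝ → ℂ) (a t : ℝ) :
    causalConv (fun s => f s * Real.exp (a * s)) (fun s => g s * Real.exp (a * s)) t =
      causalConv f g t * Real.exp (a * t) := by
  rw [causalConv, causalConv, ← intervalIntegral.integral_mul_const]
  congr 1 with τ
  have hexp : (Real.exp (a * (t - τ)) : ℂ) * Real.exp (a * τ) = Real.exp (a * t) := by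
    rw [← Complex.ofReal_mul, ← Real.exp_add]
    ring_nf
  linear_combination f (t - τ) * g τ * hexp

theorem closed_loop_impulse_response_exists_general
    (α : ℝ) (fo : ℝ → ℂ) (hfo : Measurable fo)
    (hfoint : IntegrableOn (fun t : ℝ => ‖fo t‖ * Real.exp (-α * t)) (Set.Ioi 0))
    (hnorm : (∫ t in Set.Ioi (0:ℝ), ‖fo t‖ * Real.exp (-α * t)) < 1) :
    ∃ fcl : ℝ → ℂ, Measurable fcl ∧
      IntegrableOn (fun t : ℝ => ‖fcl t‖ * Real.exp (-α * t)) (Set.Ioi 0) ∧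
      (∀ᵐ t : ℝ, 0 ≤ t → fcl t + causalConv fo fcl t = fo t) ∧
      (∫ t in Set.Ioi (0:ℝ), ‖fcl t‖ * Real.exp (-α * t))
        ≤ (∫ t in Set.Ioi (0:ℝ), ‖fo t‖ * Real.exp (-α * t))
          / (1 - ∫ t in Set.Ioi (0:ℝ), ‖fo t‖ * Real.exp (-α * t)) := by
  have norm_mul_exp (g : ℝ → ℂ) (a t : ℝ) :
      ‖g t * Real.exp (a * t)‖ = ‖g t‖ * Real.exp (a * t) := by
    rw [norm_mul, Complex.norm_real, Real.norm_of_nonneg (Real.exp_pos _).le]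
  set u : ℝ → ℂ := fun t => fo t * Real.exp (-α * t)
  have hu : IntegrableOn u (Ioi 0) := by
    refine (integrable_norm_iff (by fun_prop)).1 ?_
    simp only [u, norm_mul_exp]
    exact hfoint
  obtain ⟨v, hv_meas, hv_int, hv_eq, hv_bound⟩ :=
    exists_resolvent_of_integral_norm_lt_one hu (by simpa only [u, norm_mul_exp] using hnorm)
  set fcl : ℝ → ℂ := fun t => v t * Real.exp (α * t)
  have hexp (t : ℝ) : (Real.exp (α * t) : ℂ) * Real.exp (-α * t) = 1 := by
    rw [← Complex.ofReal_mul, ← Real.exp_add, neg_mul, add_neg_cancel, Real.exp_zero,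
      Complex.ofReal_one]
  have hv (t : ℝ) : fcl t * Real.exp (-α * t) = v t := by
    rw [mul_assoc, hexp, mul_one]
  have hv_norm (t : ℝ) : ‖fcl t‖ * Real.exp (-α * t) = ‖v t‖ := by rw [← norm_mul_exp, hv]
  refine ⟨fcl, by fun_prop, ?_, ?_, ?_⟩
  · simp only [hv_norm]
    exact hv_int.norm
  · rw [Measure.restrict_congr_set Ioi_ae_eq_Ici, ae_restrict_iff' measurableSet_Ici] at hv_eq
    filter_upwards [hv_eq] with t ht ht0
    have hconv := causalConv_mul_exp fo fcl (-α) t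
    simp only [hv] at hconv
    rw [hconv] at ht
    linear_combination (Real.exp (α * t) : ℂ) * ht ht0 - (causalConv fo fcl t - fo t) * hexp t
  · simp only [hv_norm, ← norm_mul_exp]
    exact hv_bound

/-- If `‖f_o‖_{1,α} < 1` then there exists a closed-loop impulse response
`f_cl ∈ L_{1,α}` with `f_cl + f_o ∗ f_cl = f_o` a.e. on `[0,∞)` and
`‖f_cl‖_{1,α} ≤ ‖f_o‖_{1,α} / (1 - ‖f_o‖_{1,α})`. -/
theorem closed_loop_impulse_response_exists
    (α : ℝ) (hα : 0 ≤ α) (fo : ℝ → ℂ) (hfo : Measurable fo)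
    (hfoint : IntegrableOn (fun t : ℝ => ‖fo t‖ * Real.exp (-α * t)) (Set.Ioi 0))
    (hnorm : (∫ t in Set.Ioi (0:ℝ), ‖fo t‖ * Real.exp (-α * t)) < 1) :
    ∃ fcl : ℝ → ℂ, Measurable fcl ∧
      IntegrableOn (fun t : ℝ => ‖fcl t‖ * Real.exp (-α * t)) (Set.Ioi 0) ∧
      (∀ᵐ t : ℝ, 0 ≤ t → fcl t + causalConv fo fcl t = fo t) ∧
      (∫ t in Set.Ioi (0:ℝ), ‖fcl t‖ * Real.exp (-α * t))
        ≤ (∫ t in Set.Ioi (0:ℝ), ‖fo t‖ * Real.exp (-α * t))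
          / (1 - ∫ t in Set.Ioi (0:ℝ), ‖fo t‖ * Real.exp (-α * t)) :=
  closed_loop_impulse_response_exists_general α fo hfo hfoint hnorm
end

section
/- Let α ≥ 0, let f_o : [0,∞) → ℂ be measurable with ‖f_o‖_{1,α} = ∫₀^∞ |f_o(t)| e^{−α t} dt < 1, and let f_cl ∈ L_{1,α} satisfy f_cl + f_o ∗ f_cl = f_o almost everywhere on [0,∞). Then for every complex s with Re s ≥ α one has |F_o(s)| < 1 (so 1 + F_o(s) ≠ 0) and the Laplace transforms satisfy F_cl(s) = F_o(s) / (1 + F_o(s)), where F_o(s) = ∫₀^∞ f_o(t) e^{−s t} dt and F_cl(s) = ∫₀^∞ f_cl(t) e^{−s t} dt. -/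
open MeasureTheory Real Set
open scoped Convolution

/-- The Laplace transform `F(s) = ∫₀^∞ f(t) e^{-s t} dt`. -/
noncomputable def laplace (f : ℝ → ℂ) (s : ℂ) : ℂ :=
  ∫ t in Set.Ioi (0:ℝ), f t * Complex.exp (-s * t)

/-!
Multiplying by `e^{-st}` and extending by zero to `(-∞, 0]` turns the causal convolution into an
ordinary convolution on `ℝ` of integrable functions, so by Fubini the Laplace transform of
`f ∗ g` is `F · G` for `Re s ≥ α`. Transforming the loop equation gives `F_cl + F_o F_cl = F_o`,
and `|F_o(s)| ≤ ‖f_o‖_{1,α} < 1` allows dividing by `1 + F_o(s)`.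
-/

noncomputable def laplaceIntegrand (f : ℝ → ℂ) (s : ℂ) : ℝ → ℂ :=
  (Ioi 0).indicator fun t => f t * Complex.exp (-s * t)

lemma integral_laplaceIntegrand (f : ℝ → ℂ) (s : ℂ) :
    ∫ t, laplaceIntegrand f s t = laplace f s :=
  integral_indicator measurableSet_Ioi

lemma norm_mul_cexp_neg_mul_le {α t : ℝ} {s : ℂ} (hs : α ≤ s.re) (ht : 0 < t) (z : ℂ) :
    ‖z * Complex.exp (-s * t)‖ ≤ ‖z‖ * Real.exp (-α * t) := by
  rw [norm_mul, Complex.norm_exp]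
  gcongr
  simp only [Complex.mul_re, Complex.neg_re, Complex.ofReal_re, Complex.neg_im,
    Complex.ofReal_im, mul_zero, sub_zero]
  nlinarith

lemma integrable_laplaceIntegrand {α : ℝ} {f : ℝ → ℂ} (hf : Measurable f)
    (hint : IntegrableOn (fun t => ‖f t‖ * Real.exp (-α * t)) (Ioi 0))
    {s : ℂ} (hs : α ≤ s.re) : Integrable (laplaceIntegrand f s) := by
  refine (integrable_indicator_iff measurableSet_Ioi).2 (hint.mono' ?_ ?_)
  · exact (hf.mul (by fun_prop)).aestronglyMeasurable
  · filter_upwards [ae_restrict_mem measurableSet_Ioi] with t ht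
    exact norm_mul_cexp_neg_mul_le hs ht (f t)

lemma norm_laplace_le {α : ℝ} {f : ℝ → ℂ}
    (hint : IntegrableOn (fun t => ‖f t‖ * Real.exp (-α * t)) (Ioi 0))
    {s : ℂ} (hs : α ≤ s.re) :
    ‖laplace f s‖ ≤ ∫ t in Ioi 0, ‖f t‖ * Real.exp (-α * t) := by
  refine (norm_integral_le_integral_norm _).trans
    (integral_mono_of_nonneg (.of_forall fun t => norm_nonneg _) hint ?_)
  filter_upwards [ae_restrict_mem measurableSet_Ioi] with t ht
  exact norm_mul_cexp_neg_mul_le hs ht (f t)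

lemma laplaceIntegrand_mul_laplaceIntegrand_sub (f g : ℝ → ℂ) (s : ℂ) (t τ : ℝ) :
    laplaceIntegrand g s τ * laplaceIntegrand f s (t - τ) =
      (Ioo 0 t).indicator (fun τ => f (t - τ) * g τ * Complex.exp (-s * t)) τ := by
  have hexp : Complex.exp (-s * t) = Complex.exp (-s * τ) * Complex.exp (-s * ↑(t - τ)) := by
    rw [← Complex.exp_add]; push_cast; ring_nf
  simp only [laplaceIntegrand, indicator_apply, mem_Ioi, mem_Ioo, sub_pos]
  split_ifs <;> first | tauto | simp only [zero_mul, mul_zero] | (rw [hexp]; ring)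

lemma convolution_laplaceIntegrand (f g : ℝ → ℂ) (s : ℂ) :
    laplaceIntegrand g s ⋆[ContinuousLinearMap.mul ℂ ℂ] laplaceIntegrand f s =
      laplaceIntegrand (causalConv f g) s := by
  ext t
  rw [convolution_def]
  simp only [ContinuousLinearMap.mul_apply', laplaceIntegrand_mul_laplaceIntegrand_sub,
    integral_indicator measurableSet_Ioo, integral_mul_const]
  by_cases ht : 0 < t
  · rw [laplaceIntegrand, indicator_of_mem (mem_Ioi.2 ht), causalConv,
      intervalIntegral.integral_of_le ht.le, integral_Ioc_eq_integral_Ioo]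
  · rw [Ioo_eq_empty ht, Measure.restrict_empty, integral_zero_measure, zero_mul,
      laplaceIntegrand, indicator_of_notMem (mt mem_Ioi.1 ht)]

lemma integrable_laplaceIntegrand_causalConv {f g : ℝ → ℂ} {s : ℂ}
    (hf : Integrable (laplaceIntegrand f s)) (hg : Integrable (laplaceIntegrand g s)) :
    Integrable (laplaceIntegrand (causalConv f g) s) :=
  convolution_laplaceIntegrand f g s ▸ hg.integrable_convolution _ hf

lemma laplace_causalConv {f g : ℝ → ℂ} {s : ℂ} (hf : Integrable (laplaceIntegrand f s))
    (hg : Integrable (laplaceIntegrand g s)) :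
    laplace (causalConv f g) s = laplace f s * laplace g s := by
  rw [← integral_laplaceIntegrand, ← convolution_laplaceIntegrand, integral_convolution _ hg hf,
    integral_laplaceIntegrand, integral_laplaceIntegrand, ContinuousLinearMap.mul_apply', mul_comm]

lemma laplace_add_of_ae_eq {f g h : ℝ → ℂ} {s : ℂ} (hf : Integrable (laplaceIntegrand f s))
    (hg : Integrable (laplaceIntegrand g s)) (hfgh : ∀ᵐ t, 0 < t → f t + g t = h t) :
    laplace f s + laplace g s = laplace h s := by
  simp only [← integral_laplaceIntegrand, ← integral_add hf hg]
  refine integral_congr_ae ?_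
  filter_upwards [hfgh] with t ht
  by_cases ht0 : 0 < t
  · simp only [laplaceIntegrand, indicator_of_mem (mem_Ioi.2 ht0), ← add_mul, ht ht0]
  · simp only [laplaceIntegrand, indicator_of_notMem (mt mem_Ioi.1 ht0), add_zero]

theorem closed_loop_transfer_function_general
    (α : ℝ) (fo fcl : ℝ → ℂ) (hfo : Measurable fo) (hfcl : Measurable fcl)
    (hfoint : IntegrableOn (fun t : ℝ => ‖fo t‖ * Real.exp (-α * t)) (Set.Ioi 0))
    (hnorm : (∫ t in Set.Ioi (0:ℝ), ‖fo t‖ * Real.exp (-α * t)) < 1)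
    (hfclint : IntegrableOn (fun t : ℝ => ‖fcl t‖ * Real.exp (-α * t)) (Set.Ioi 0))
    (heq : ∀ᵐ t : ℝ, 0 ≤ t → fcl t + causalConv fo fcl t = fo t) :
    ∀ s : ℂ, α ≤ s.re →
      ‖laplace fo s‖ < 1 ∧ 1 + laplace fo s ≠ 0 ∧
      laplace fcl s = laplace fo s / (1 + laplace fo s) := by
  intro s hs
  have hlt : ‖laplace fo s‖ < 1 := (norm_laplace_le hfoint hs).trans_lt hnorm
  have hne : 1 + laplace fo s ≠ 0 := fun h => by
    simp [eq_neg_of_add_eq_zero_right h] at hlt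
  have hFo := integrable_laplaceIntegrand hfo hfoint hs
  have hFcl := integrable_laplaceIntegrand hfcl hfclint hs
  have key : laplace fcl s + laplace fo s * laplace fcl s = laplace fo s := by
    rw [← laplace_causalConv hFo hFcl]
    exact laplace_add_of_ae_eq hFcl (integrable_laplaceIntegrand_causalConv hFo hFcl)
      (heq.mono fun t h ht => h ht.le)
  refine ⟨hlt, hne, ?_⟩
  rw [eq_div_iff hne]
  linear_combination key

/-- If `‖f_o‖_{1,α} < 1` and `f_cl ∈ L_{1,α}` satisfies
`f_cl + f_o ∗ f_cl = f_o` a.e. on `[0,∞)`, then for every `s` with `Re s ≥ α` we have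
`|F_o(s)| < 1` (so `1 + F_o(s) ≠ 0`) and `F_cl(s) = F_o(s) / (1 + F_o(s))`. -/
theorem closed_loop_transfer_function
    (α : ℝ) (hα : 0 ≤ α) (fo fcl : ℝ → ℂ) (hfo : Measurable fo) (hfcl : Measurable fcl)
    (hfoint : IntegrableOn (fun t : ℝ => ‖fo t‖ * Real.exp (-α * t)) (Set.Ioi 0))
    (hnorm : (∫ t in Set.Ioi (0:ℝ), ‖fo t‖ * Real.exp (-α * t)) < 1)
    (hfclint : IntegrableOn (fun t : ℝ => ‖fcl t‖ * Real.exp (-α * t)) (Set.Ioi 0))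
    (heq : ∀ᵐ t : ℝ, 0 ≤ t → fcl t + causalConv fo fcl t = fo t) :
    ∀ s : ℂ, α ≤ s.re →
      ‖laplace fo s‖ < 1 ∧ 1 + laplace fo s ≠ 0 ∧
      laplace fcl s = laplace fo s / (1 + laplace fo s) :=
  closed_loop_transfer_function_general α fo fcl hfo hfcl hfoint hnorm hfclint heq
end

section
/- Let a, L ∈ ℂ and let G : ℂ → ℂ be continuous on a punctured neighborhood of a, and suppose (s − a)·G(s) → L as s → a with s ≠ a. Then the integral of G along the right semicircle of radius ρ centered at a converges, as ρ → 0⁺, to iπL: lim_{ρ→0⁺} ∫_{−π/2}^{π/2} G(a + ρe^{iφ}) · (i ρ e^{iφ}) dφ = iπL. -/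
open Filter Complex Real
open scoped Topology

/-!
On the circle `s = a + ρ e^{iφ}` one has `ds = i (s - a) dφ`, so the integrand is
`i (s - a) G(s)`. Since `|s - a| = ρ` for every `φ`, the hypothesis makes this converge to `i L`
uniformly in `φ` as `ρ → 0⁺`, and uniform convergence passes to the integral over an interval
of length `π`.
-/

theorem tendsto_circleMap_nhdsNE (c : ℂ) :
    Tendsto (fun q : ℝ × ℝ => circleMap c q.1 q.2) (𝓝[>] 0 ×ˢ ⊤) (𝓝[≠] c) := by
  have hρ : Tendsto Prod.fst (𝓝[>] (0 : ℝ) ×ˢ (⊤ : Filter ℝ)) (𝓝[>] 0) := tendsto_fst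
  refine tendsto_nhdsWithin_iff.2 ⟨?_, (hρ.eventually self_mem_nhdsWithin).mono
    fun q hq => circleMap_ne_center (ne_of_gt hq)⟩
  rw [tendsto_iff_dist_tendsto_zero]
  simpa [dist_eq_norm, circleMap_sub_center, norm_circleMap_zero] using
    (hρ.mono_right nhdsWithin_le_nhds).abs

theorem eventually_forall_circleMap_mem {c : ℂ} {s : Set ℂ} (hs : s ∈ 𝓝[≠] c) :
    ∀ᶠ ρ in 𝓝[>] 0, ∀ θ, circleMap c ρ θ ∈ s :=
  ((tendsto_circleMap_nhdsNE c).eventually hs).curry.mono fun _ h => eventually_top.1 h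

theorem tendstoUniformly_comp_circleMap {E : Type*} [UniformSpace E] {F : ℂ → E} {c : ℂ}
    {L : E} (hF : Tendsto F (𝓝[≠] c) (𝓝 L)) :
    TendstoUniformly (fun ρ θ => F (circleMap c ρ θ)) (fun _ => L) (𝓝[>] 0) :=
  tendstoUniformly_iff_tendsto.2 <|
    Uniform.tendsto_nhds_right.1 (hF.comp (tendsto_circleMap_nhdsNE c))

theorem tendsto_intervalIntegral_comp_circleMap {E : Type*} [NormedAddCommGroup E]
    [NormedSpace ℝ E] [CompleteSpace E] {F : ℂ → E} {c : ℂ} {U : Set ℂ} {L : E}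
    (hU : U ∈ 𝓝 c) (hF : ContinuousOn F (U \ {c})) (hFL : Tendsto F (𝓝[≠] c) (𝓝 L))
    (α β : ℝ) :
    Tendsto (fun ρ : ℝ => ∫ θ in α..β, F (circleMap c ρ θ)) (𝓝[>] 0)
      (𝓝 ((β - α) • L)) := by
  have hcont : ∀ᶠ ρ in 𝓝[>] 0,
      ContinuousOn (fun θ => F (circleMap c ρ θ)) (Set.uIcc α β) :=
    (eventually_forall_circleMap_mem (sdiff_mem_nhdsWithin_compl hU {c})).mono
      fun ρ hρ => (hF.comp_continuous (continuous_circleMap c ρ) hρ).continuousOn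
  have hlim := (tendstoUniformly_comp_circleMap hFL).tendstoUniformlyOn
    |>.tendsto_intervalIntegral_of_continuousOn (μ := MeasureTheory.volume) hcont
  rwa [intervalIntegral.integral_const] at hlim

/-- If `G` is continuous on a punctured neighborhood of `a` and
`(s - a)·G(s) → L` as `s → a`, `s ≠ a`, then the integral of `G` over the right
semicircle of radius `ρ` centered at `a` tends to `iπL` as `ρ → 0⁺`. -/
theorem semicircle_integral_limit
    (a L : ℂ) (G : ℂ → ℂ) (U : Set ℂ) (hU : U ∈ nhds a)
    (hGcont : ContinuousOn G (U \ {a}))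
    (hG : Filter.Tendsto (fun s : ℂ => (s - a) * G s) (nhdsWithin a {a}ᶜ) (nhds L)) :
    Filter.Tendsto
      (fun ρ : ℝ => ∫ φ in (-(π/2) : ℝ)..(π/2),
        G (a + (ρ : ℂ) * Complex.exp (φ * Complex.I))
          * (Complex.I * (ρ : ℂ) * Complex.exp (φ * Complex.I)))
      (nhdsWithin 0 (Set.Ioi 0)) (nhds (Complex.I * (π : ℂ) * L)) := by
  have hlim := tendsto_intervalIntegral_comp_circleMap (F := fun s => (s - a) * G s) hU
    ((continuousOn_id.sub continuousOn_const).mul hGcont) hG (-(π/2)) (π/2)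
  have hintegrand : ∀ ρ φ : ℝ, G (a + ρ * exp (φ * I)) * (I * ρ * exp (φ * I)) =
      I * ((circleMap a ρ φ - a) * G (circleMap a ρ φ)) := by
    intro ρ φ
    simp only [circleMap]
    ring
  simp_rw [hintegrand, intervalIntegral.integral_const_mul]
  convert hlim.const_mul I using 2
  rw [Complex.real_smul]
  push_cast
  ring
end
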